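/- arXiv:2411.14123 — 3 statements merged into one kernel-verified Lean document; each statement's English description precedes it below -/
import Mathlib

section
/- Converse core of Proposition 1. Let q_{X1X2Y} be the Example-1 target distribution. Suppose finite random variables (X1,X2,U1,U2,Y) have joint pmf factoring as p(x1)p(x2)p(u1|x1)p(u2|x2)p(y|u1,u2) whose (X1,X2,Y)-marginal equals q_{X1X2Y}. Then H(X1|U1) = 0 and H(X2|U2) = 0; consequently I(U1;X1) = 1 bit and I(U2;X2) = 1 bit. -/
open scoped BigOperators

namespace SecCoord

/-- `p` is a probability mass function on the finite type `α`. -/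
def IsPMF {α : Type*} [Fintype α] (p : α → ℝ) : Prop :=
  (∀ a, 0 ≤ p a) ∧ ∑ a, p a = 1

/-- Total variation distance between two pmfs: half the `ℓ¹`-distance. -/
noncomputable def TV {α : Type*} [Fintype α] (p q : α → ℝ) : ℝ :=
  (1 / 2) * ∑ a, |p a - q a|

/-- Distribution (pushforward pmf) of a random variable `X : Ω → α` under `μ`. -/
noncomputable def dist {Ω α : Type*} [Fintype Ω] (μ : Ω → ℝ) (X : Ω → α) : α → ℝ :=
  fun a => ∑ ω, Set.indicator {ω' | X ω' = a} μ ω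

/-- Shannon entropy (in bits) of the random variable `X` under `μ`. -/
noncomputable def H {Ω α : Type*} [Fintype Ω] [Fintype α] (μ : Ω → ℝ) (X : Ω → α) : ℝ :=
  -∑ a, dist μ X a * Real.logb 2 (dist μ X a)

/-- Conditional Shannon entropy `H(X | Z)` (in bits). -/
noncomputable def condEnt {Ω α β : Type*} [Fintype Ω] [Fintype α] [Fintype β]
    (μ : Ω → ℝ) (X : Ω → α) (Z : Ω → β) : ℝ :=
  H μ (fun ω => (X ω, Z ω)) - H μ Z

/-- Mutual information `I(X; Y)` (in bits). -/
noncomputable def MI {Ω α β : Type*} [Fintype Ω] [Fintype α] [Fintype β]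
    (μ : Ω → ℝ) (X : Ω → α) (Y : Ω → β) : ℝ :=
  H μ X + H μ Y - H μ (fun ω => (X ω, Y ω))

/-- Conditional mutual information `I(X; Y | Z)` (in bits). -/
noncomputable def CMI {Ω α β γ : Type*} [Fintype Ω] [Fintype α] [Fintype β] [Fintype γ]
    (μ : Ω → ℝ) (X : Ω → α) (Y : Ω → β) (Z : Ω → γ) : ℝ :=
  (H μ (fun ω => (X ω, Z ω))) + (H μ (fun ω => (Y ω, Z ω)))
    - (H μ (fun ω => (X ω, Y ω, Z ω))) - H μ Z

section Helpers
set_option linter.unusedSectionVars false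
variable {Ω α β : Type*} [Fintype Ω] [Fintype α] [Fintype β]

open Classical in
lemma dist_pair_of_fun (μ : Ω → ℝ)
    (X : Ω → α) (Z : Ω → β) (f : β → α)
    (h : ∀ ω, μ ω ≠ 0 → X ω = f (Z ω)) (a : α) (b : β) :
    dist μ (fun ω => (X ω, Z ω)) (a, b) = if a = f b then dist μ Z b else 0 := by
  classical
  unfold dist
  split_ifs with hab
  · refine Finset.sum_congr rfl fun ω _ => ?_
    by_cases hm : μ ω = 0
    · simp [Set.indicator_apply, hm]
    · have hx := h ω hm
      simp only [Set.indicator_apply, Set.mem_setOf_eq, Prod.mk.injEq]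
      by_cases hz : Z ω = b
      · simp [hz, hx, hab]
      · simp [hz]
  · refine Finset.sum_eq_zero fun ω _ => ?_
    rw [Set.indicator_apply]
    split_ifs with hmem
    · simp only [Set.mem_setOf_eq, Prod.mk.injEq] at hmem
      by_contra hm
      exact hab (hmem.1 ▸ hmem.2 ▸ h ω hm)
    · rfl

lemma H_pair_of_fun (μ : Ω → ℝ)
    (X : Ω → α) (Z : Ω → β) (f : β → α)
    (h : ∀ ω, μ ω ≠ 0 → X ω = f (Z ω)) :
    H μ (fun ω => (X ω, Z ω)) = H μ Z := by
  classical
  unfold H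
  congr 1
  rw [Fintype.sum_prod_type, Finset.sum_comm]
  refine Finset.sum_congr rfl fun b _ => ?_
  have key : ∀ a : α, dist μ (fun ω => (X ω, Z ω)) (a, b)
      * Real.logb 2 (dist μ (fun ω => (X ω, Z ω)) (a, b))
      = if a = f b then dist μ Z b * Real.logb 2 (dist μ Z b) else 0 := by
    intro a
    rw [dist_pair_of_fun μ X Z f h a b]
    split_ifs with hab <;> simp
  rw [Finset.sum_congr rfl fun a _ => key a, Finset.sum_ite_eq' Finset.univ (f b)]
  simp

lemma H_comp_inj (μ : Ω → ℝ) (W : Ω → β) (g : β → α) (hg : Function.Injective g) :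
    H μ (fun ω => g (W ω)) = H μ W := by
  classical
  unfold H
  congr 1
  have hd : ∀ b, dist μ (fun ω => g (W ω)) (g b) = dist μ W b := by
    intro b; unfold dist
    refine Finset.sum_congr rfl fun ω _ => ?_
    simp [Set.indicator_apply, hg.eq_iff]
  have h0 : ∀ a, a ∉ Finset.image g Finset.univ → dist μ (fun ω => g (W ω)) a = 0 := by
    intro a ha
    unfold dist
    refine Finset.sum_eq_zero fun ω _ => ?_
    have : g (W ω) ≠ a := fun hc => ha (hc ▸ Finset.mem_image_of_mem g (Finset.mem_univ _))
    simp [Set.indicator_apply, this]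
  rw [← Finset.sum_subset (Finset.subset_univ (Finset.image g Finset.univ))
      (fun a _ ha => by rw [h0 a ha]; simp),
    Finset.sum_image (fun x _ y _ hxy => hg hxy)]
  exact Finset.sum_congr rfl fun b _ => by rw [hd b]

end Helpers

section Example1Converse

/-- The Example-1 target distribution `q_{X1 X2 Y}`: `X1, X2` are independent uniform
bits and `Y = X1` if `X2 = 1` (`true`), `Y = 'e'` (here `none`) if `X2 = 0`. -/
noncomputable def qEx : Bool × Bool × Option Bool → ℝ :=
  fun (x1, x2, y) => (1 / 4) * (if y = (if x2 then some x1 else none) then 1 else 0)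

/-- **Converse core of Proposition 1.**  If `(X1, X2, U1, U2, Y)` have a joint pmf
factoring as `p(x1)p(x2)p(u1|x1)p(u2|x2)p(y|u1,u2)` whose `(X1, X2, Y)`-marginal is
the Example-1 target distribution, then `H(X1|U1) = 0`, `H(X2|U2) = 0`, and
consequently `I(U1;X1) = 1` and `I(U2;X2) = 1` (bits). -/
theorem example1_converse_core
    {U1 U2 : Type} [Fintype U1] [Fintype U2]
    (pU1 : Bool → U1 → ℝ) (hpU1 : ∀ x, IsPMF (pU1 x))
    (pU2 : Bool → U2 → ℝ) (hpU2 : ∀ x, IsPMF (pU2 x))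
    (pYc : U1 → U2 → Option Bool → ℝ) (hpYc : ∀ u1 u2, IsPMF (pYc u1 u2))
    (μ : Bool × Bool × U1 × U2 × Option Bool → ℝ)
    (hμ : ∀ x1 x2 u1 u2 y,
      μ (x1, x2, u1, u2, y) = (1 / 4) * pU1 x1 u1 * pU2 x2 u2 * pYc u1 u2 y)
    (hmarg : ∀ x1 x2 y,
      (∑ u1 : U1, ∑ u2 : U2, μ (x1, x2, u1, u2, y)) = qEx (x1, x2, y)) :
    condEnt μ (fun ω => ω.1) (fun ω => ω.2.2.1) = 0 ∧
    condEnt μ (fun ω => ω.2.1) (fun ω => ω.2.2.2.1) = 0 ∧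
    MI μ (fun ω => ω.2.2.1) (fun ω => ω.1) = 1 ∧
    MI μ (fun ω => ω.2.2.2.1) (fun ω => ω.2.1) = 1 := by
  classical
  -- nonnegativity of μ
  have hμ0 : ∀ ω, 0 ≤ μ ω := by
    rintro ⟨x1, x2, u1, u2, y⟩
    rw [hμ]
    have h1 := (hpU1 x1).1 u1
    have h2 := (hpU2 x2).1 u2
    have h3 := (hpYc u1 u2).1 y
    positivity
  -- key vanishing lemma
  have key : ∀ (x1 x2 : Bool) (y : Option Bool), qEx (x1, x2, y) = 0 →
      ∀ u1 u2, 0 < pU1 x1 u1 → 0 < pU2 x2 u2 → pYc u1 u2 y = 0 := by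
    intro x1 x2 y hq u1 u2 h1 h2
    have hsum : ∑ u1 : U1, ∑ u2 : U2, μ (x1, x2, u1, u2, y) = 0 := by
      rw [hmarg]; exact hq
    have hin : ∑ u2 : U2, μ (x1, x2, u1, u2, y) = 0 :=
      (Finset.sum_eq_zero_iff_of_nonneg (fun u _ =>
        Finset.sum_nonneg fun v _ => hμ0 _)).mp hsum u1 (Finset.mem_univ _)
    have h0 : μ (x1, x2, u1, u2, y) = 0 :=
      (Finset.sum_eq_zero_iff_of_nonneg (fun v _ => hμ0 _)).mp hin u2 (Finset.mem_univ _)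
    rw [hμ] at h0
    have h3 := (hpYc u1 u2).1 y
    nlinarith [mul_pos h1 h2]
  -- existence of positive-probability points
  have hex1 : ∃ u1, 0 < pU1 false u1 := by
    by_contra hc
    push_neg at hc
    have : ∑ u, pU1 false u ≤ 0 := Finset.sum_nonpos fun u _ => hc u
    rw [(hpU1 false).2] at this; linarith
  have hex2 : ∃ u2, 0 < pU2 true u2 := by
    by_contra hc
    push_neg at hc
    have : ∑ u, pU2 true u ≤ 0 := Finset.sum_nonpos fun u _ => hc u
    rw [(hpU2 true).2] at this; linarith
  -- disjoint supports
  have hdisj1 : ∀ u1, 0 < pU1 false u1 → 0 < pU1 true u1 → False := by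
    intro u1 hf ht
    obtain ⟨u2, hu2⟩ := hex2
    have h1 : pYc u1 u2 (some true) = 0 := key false true (some true) (by simp [qEx]) u1 u2 hf hu2
    have h2 : pYc u1 u2 (some false) = 0 := key true true (some false) (by simp [qEx]) u1 u2 ht hu2
    have h3 : pYc u1 u2 none = 0 := key false true none (by simp [qEx]) u1 u2 hf hu2
    have hs := (hpYc u1 u2).2
    rw [Fintype.sum_option, Fintype.sum_bool] at hs
    rw [h1, h2, h3] at hs
    norm_num at hs
  have hdisj2 : ∀ u2, 0 < pU2 false u2 → 0 < pU2 true u2 → False := by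
    intro u2 h2f h2t
    obtain ⟨u1, hu1⟩ := hex1
    have h1 : pYc u1 u2 (some true) = 0 := key false true (some true) (by simp [qEx]) u1 u2 hu1 h2t
    have h2 : pYc u1 u2 (some false) = 0 :=
      key false false (some false) (by simp [qEx]) u1 u2 hu1 h2f
    have h3 : pYc u1 u2 none = 0 := key false true none (by simp [qEx]) u1 u2 hu1 h2t
    have hs := (hpYc u1 u2).2
    rw [Fintype.sum_option, Fintype.sum_bool] at hs
    rw [h1, h2, h3] at hs
    norm_num at hs
  -- deterministic decoding functions
  set f1 : U1 → Bool := fun u => if 0 < pU1 true u then true else false with hf1def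
  set f2 : U2 → Bool := fun u => if 0 < pU2 true u then true else false with hf2def
  have hfun1 : ∀ ω : Bool × Bool × U1 × U2 × Option Bool,
      μ ω ≠ 0 → ω.1 = f1 ω.2.2.1 := by
    rintro ⟨x1, x2, u1, u2, y⟩ hne
    rw [hμ] at hne
    have hp1 : pU1 x1 u1 ≠ 0 := by
      intro h; apply hne; rw [h]; ring
    have hp1' : 0 < pU1 x1 u1 := lt_of_le_of_ne ((hpU1 x1).1 u1) (Ne.symm hp1)
    cases x1 with
    | false =>
      simp only [hf1def]
      rw [if_neg]
      intro h
      exact hdisj1 u1 hp1' h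
    | true =>
      simp only [hf1def]
      rw [if_pos hp1']
  have hfun2 : ∀ ω : Bool × Bool × U1 × U2 × Option Bool,
      μ ω ≠ 0 → ω.2.1 = f2 ω.2.2.2.1 := by
    rintro ⟨x1, x2, u1, u2, y⟩ hne
    rw [hμ] at hne
    have hp2 : pU2 x2 u2 ≠ 0 := by
      intro h; apply hne; rw [h]; ring
    have hp2' : 0 < pU2 x2 u2 := lt_of_le_of_ne ((hpU2 x2).1 u2) (Ne.symm hp2)
    cases x2 with
    | false =>
      simp only [hf2def]
      rw [if_neg]
      intro h
      exact hdisj2 u2 hp2' h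
    | true =>
      simp only [hf2def]
      rw [if_pos hp2']
  -- conditional entropies vanish
  have hH1 : H μ (fun ω => (ω.1, ω.2.2.1)) = H μ (fun ω => ω.2.2.1) :=
    H_pair_of_fun μ _ _ f1 hfun1
  have hH2 : H μ (fun ω => (ω.2.1, ω.2.2.2.1)) = H μ (fun ω => ω.2.2.2.1) :=
    H_pair_of_fun μ _ _ f2 hfun2
  have hc1 : condEnt μ (fun ω => ω.1) (fun ω => ω.2.2.1) = 0 := by
    unfold condEnt; rw [hH1]; ring
  have hc2 : condEnt μ (fun ω => ω.2.1) (fun ω => ω.2.2.2.1) = 0 := by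
    unfold condEnt; rw [hH2]; ring
  -- distributions of X1, X2 are uniform
  have hdX1 : ∀ a : Bool, dist μ (fun ω : Bool × Bool × U1 × U2 × Option Bool => ω.1) a
      = 1 / 2 := by
    intro a
    unfold dist
    simp only [Set.indicator_apply, Set.mem_setOf_eq]
    rw [Fintype.sum_prod_type]
    have step : ∀ x1 : Bool,
        (∑ r : Bool × U1 × U2 × Option Bool, if (x1, r).1 = a then μ (x1, r) else 0)
        = if x1 = a then ∑ r : Bool × U1 × U2 × Option Bool, μ (x1, r) else 0 := by
      intro x1
      by_cases hx : x1 = a <;> simp [hx]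
    rw [Finset.sum_congr rfl fun x1 _ => step x1, Finset.sum_ite_eq' Finset.univ a]
    simp only [Finset.mem_univ, if_true]
    have hre : (∑ r : Bool × U1 × U2 × Option Bool, μ (a, r))
        = ∑ x2 : Bool, ∑ y : Option Bool, qEx (a, x2, y) := by
      rw [Fintype.sum_prod_type]
      refine Finset.sum_congr rfl fun x2 _ => ?_
      rw [Fintype.sum_prod_type]
      rw [show (∑ u1 : U1, ∑ r : U2 × Option Bool, μ (a, x2, u1, r))
          = ∑ u1 : U1, ∑ u2 : U2, ∑ y : Option Bool, μ (a, x2, u1, u2, y) from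
        Finset.sum_congr rfl fun u1 _ => Fintype.sum_prod_type _]
      rw [show (∑ u1 : U1, ∑ u2 : U2, ∑ y : Option Bool, μ (a, x2, u1, u2, y))
          = ∑ u1 : U1, ∑ y : Option Bool, ∑ u2 : U2, μ (a, x2, u1, u2, y) from
        Finset.sum_congr rfl fun u1 _ => Finset.sum_comm]
      rw [Finset.sum_comm]
      exact Finset.sum_congr rfl fun y _ => hmarg a x2 y
    rw [hre]
    cases a <;> simp [qEx, Fintype.sum_option, Fintype.sum_bool] <;> norm_num
  have hdX2 : ∀ a : Bool, dist μ (fun ω : Bool × Bool × U1 × U2 × Option Bool => ω.2.1) a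
      = 1 / 2 := by
    intro a
    unfold dist
    simp only [Set.indicator_apply, Set.mem_setOf_eq]
    rw [Fintype.sum_prod_type]
    have step : ∀ x1 : Bool,
        (∑ r : Bool × U1 × U2 × Option Bool, if (x1, r).2.1 = a then μ (x1, r) else 0)
        = ∑ x2 : Bool, if x2 = a then ∑ s : U1 × U2 × Option Bool, μ (x1, x2, s) else 0 := by
      intro x1
      rw [Fintype.sum_prod_type]
      refine Finset.sum_congr rfl fun x2 _ => ?_
      by_cases hx : x2 = a <;> simp [hx]
    rw [Finset.sum_congr rfl fun x1 _ => step x1]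
    have step2 : ∀ x1 : Bool,
        (∑ x2 : Bool, if x2 = a then ∑ s : U1 × U2 × Option Bool, μ (x1, x2, s) else 0)
        = ∑ s : U1 × U2 × Option Bool, μ (x1, a, s) := by
      intro x1
      rw [Finset.sum_ite_eq' Finset.univ a]
      simp
    rw [Finset.sum_congr rfl fun x1 _ => step2 x1]
    have hre : ∀ x1 : Bool, (∑ s : U1 × U2 × Option Bool, μ (x1, a, s))
        = ∑ y : Option Bool, qEx (x1, a, y) := by
      intro x1
      rw [Fintype.sum_prod_type]
      rw [show (∑ u1 : U1, ∑ r : U2 × Option Bool, μ (x1, a, u1, r))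
          = ∑ u1 : U1, ∑ u2 : U2, ∑ y : Option Bool, μ (x1, a, u1, u2, y) from
        Finset.sum_congr rfl fun u1 _ => Fintype.sum_prod_type _]
      rw [show (∑ u1 : U1, ∑ u2 : U2, ∑ y : Option Bool, μ (x1, a, u1, u2, y))
          = ∑ u1 : U1, ∑ y : Option Bool, ∑ u2 : U2, μ (x1, a, u1, u2, y) from
        Finset.sum_congr rfl fun u1 _ => Finset.sum_comm]
      rw [Finset.sum_comm]
      exact Finset.sum_congr rfl fun y _ => hmarg x1 a y
    rw [Finset.sum_congr rfl fun x1 _ => hre x1]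
    cases a <;> simp [qEx, Fintype.sum_option, Fintype.sum_bool] <;> norm_num
  -- entropies of uniform bits are 1
  have hlogb : Real.logb 2 (1 / 2 : ℝ) = -1 := by
    rw [show (1 / 2 : ℝ) = 2⁻¹ by norm_num, Real.logb_inv, Real.logb_self_eq_one] <;> norm_num
  have hHX1 : H μ (fun ω : Bool × Bool × U1 × U2 × Option Bool => ω.1) = 1 := by
    unfold H
    rw [Fintype.sum_bool, hdX1 true, hdX1 false, hlogb]
    ring
  have hHX2 : H μ (fun ω : Bool × Bool × U1 × U2 × Option Bool => ω.2.1) = 1 := by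
    unfold H
    rw [Fintype.sum_bool, hdX2 true, hdX2 false, hlogb]
    ring
  -- swap pairs
  have hswap1 : H μ (fun ω : Bool × Bool × U1 × U2 × Option Bool => (ω.2.2.1, ω.1))
      = H μ (fun ω : Bool × Bool × U1 × U2 × Option Bool => (ω.1, ω.2.2.1)) :=
    H_comp_inj μ (fun ω => (ω.1, ω.2.2.1)) Prod.swap Prod.swap_injective
  have hswap2 : H μ (fun ω : Bool × Bool × U1 × U2 × Option Bool => (ω.2.2.2.1, ω.2.1))
      = H μ (fun ω : Bool × Bool × U1 × U2 × Option Bool => (ω.2.1, ω.2.2.2.1)) :=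
    H_comp_inj μ (fun ω => (ω.2.1, ω.2.2.2.1)) Prod.swap Prod.swap_injective
  refine ⟨hc1, hc2, ?_, ?_⟩
  · unfold MI
    rw [hswap1, hH1, hHX1]
    ring
  · unfold MI
    rw [hswap2, hH2, hHX2]
    ring


end Example1Converse

end SecCoord
end

section
/- Markov chain lemma (used in Proposition 1's converse). Let (U1,X1,U2,X2,Y) be finite random variables such that the pair (U1,X1) is independent of the pair (U2,X2) and the Markov chain Y – (U1,U2) – (X1,X2) holds, i.e., I(Y;X1,X2|U1,U2) = 0. Then the Markov chains Y – (X1,U2) – X2 and Y – (X2,U1) – X1 hold, i.e., I(Y;X2|X1,U2) = 0 and I(Y;X1|X2,U1) = 0. -/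
open scoped BigOperators

namespace SecCoord

set_option linter.unusedSectionVars false

section
variable {Ω α β γ δ : Type*} [Fintype Ω] [Fintype α] [Fintype β] [Fintype γ] [Fintype δ]
  (μ : Ω → ℝ)

lemma dist_eq [DecidableEq α] (X : Ω → α) (a : α) :
    dist μ X a = ∑ ω, if X ω = a then μ ω else 0 := by
  simp [dist, Set.indicator_apply]

lemma dist_nonneg (hμ : ∀ ω, 0 ≤ μ ω) (X : Ω → α) (a : α) : 0 ≤ dist μ X a := by
  classical
  rw [dist_eq]
  exact Finset.sum_nonneg fun ω _ => by split <;> simp [hμ ω]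

lemma sum_dist (X : Ω → α) : ∑ a, dist μ X a = ∑ ω, μ ω := by
  classical
  simp_rw [dist_eq]
  rw [Finset.sum_comm]
  simp

lemma dist_comp [DecidableEq β] (g : α → β) (X : Ω → α) (b : β) :
    dist μ (fun ω => g (X ω)) b = ∑ a, if g a = b then dist μ X a else 0 := by
  classical
  simp_rw [dist_eq]
  have hsw : ∀ a : α, (if g a = b then ∑ ω, if X ω = a then μ ω else 0 else 0)
      = ∑ ω, if g a = b then (if X ω = a then μ ω else 0) else 0 := by
    intro a; split <;> simp
  simp_rw [hsw]
  rw [Finset.sum_comm]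
  congr 1
  ext ω
  rw [Finset.sum_eq_single (X ω)]
  · by_cases h : g (X ω) = b <;> simp [h]
  · intro a _ ha; simp [Ne.symm ha]
  · simp

lemma H_comp {e : α → β} (he : Function.Injective e) (X : Ω → α) :
    H μ (fun ω => e (X ω)) = H μ X := by
  classical
  have hd : ∀ a, dist μ (fun ω => e (X ω)) (e a) = dist μ X a := by
    intro a
    rw [dist_comp]
    rw [Finset.sum_eq_single a]
    · simp
    · intro a' _ ha'; rw [if_neg (fun h => ha' (he h))]
    · simp
  have hd0 : ∀ b, b ∉ Finset.univ.image e → dist μ (fun ω => e (X ω)) b = 0 := by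
    intro b hb
    rw [dist_comp]
    apply Finset.sum_eq_zero
    intro a _
    have : e a ≠ b := fun h => hb (by simp [← h])
    simp [this]
  unfold H
  congr 1
  rw [← Finset.sum_subset (Finset.subset_univ (Finset.univ.image e))
      (fun b _ hb => by rw [hd0 b hb]; simp)]
  rw [Finset.sum_image (fun a _ a' _ h => he h)]
  simp_rw [hd]

lemma H_comp' (e : α → β) (he : Function.Injective e) (X : Ω → α) (X' : Ω → β)
    (h : ∀ ω, X' ω = e (X ω)) : H μ X' = H μ X := by
  rw [show X' = fun ω => e (X ω) from funext h]; exact H_comp μ he X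

lemma CMI_comm (X : Ω → α) (Y : Ω → β) (Z : Ω → γ) :
    CMI μ X Y Z = CMI μ Y X Z := by
  unfold CMI
  have h1 : H μ (fun ω => (X ω, Y ω, Z ω)) = H μ (fun ω => (Y ω, X ω, Z ω)) :=
    H_comp' μ (fun t : β × α × γ => (t.2.1, t.1, t.2.2))
      (by rintro ⟨y, x, z⟩ ⟨y', x', z'⟩ h; simp [Prod.ext_iff] at h ⊢; tauto)
      _ _ (fun ω => rfl)
  rw [h1]; ring

lemma CMI_chain (X : Ω → α) (B : Ω → β) (C : Ω → γ) (Z : Ω → δ) :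
    CMI μ X (fun ω => (B ω, C ω)) Z
      = CMI μ X B Z + CMI μ X C (fun ω => (B ω, Z ω)) := by
  unfold CMI
  have h1 : H μ (fun ω => ((B ω, C ω), Z ω)) = H μ (fun ω => (C ω, B ω, Z ω)) :=
    H_comp' μ (fun t : γ × β × δ => ((t.2.1, t.1), t.2.2))
      (by rintro ⟨c, b, z⟩ ⟨c', b', z'⟩ h; simp [Prod.ext_iff] at h ⊢; tauto)
      _ _ (fun ω => rfl)
  have h2 : H μ (fun ω => (X ω, (B ω, C ω), Z ω)) = H μ (fun ω => (X ω, C ω, B ω, Z ω)) :=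
    H_comp' μ (fun t : α × γ × β × δ => (t.1, (t.2.2.1, t.2.1), t.2.2.2))
      (by rintro ⟨x, c, b, z⟩ ⟨x', c', b', z'⟩ h; simp [Prod.ext_iff] at h ⊢; tauto)
      _ _ (fun ω => rfl)
  rw [h1, h2]; ring

lemma MI_chain (X : Ω → α) (B : Ω → β) (C : Ω → γ) :
    MI μ X (fun ω => (B ω, C ω)) = MI μ X B + CMI μ X C B := by
  unfold MI CMI
  have h1 : H μ (fun ω => (B ω, C ω)) = H μ (fun ω => (C ω, B ω)) :=
    H_comp' μ (fun t : γ × β => (t.2, t.1))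
      (by rintro ⟨c, b⟩ ⟨c', b'⟩ h; simp [Prod.ext_iff] at h ⊢; tauto)
      _ _ (fun ω => rfl)
  have h2 : H μ (fun ω => (X ω, (B ω, C ω))) = H μ (fun ω => (X ω, C ω, B ω)) :=
    H_comp' μ (fun t : α × γ × β => (t.1, (t.2.2, t.2.1)))
      (by rintro ⟨x, c, b⟩ ⟨x', c', b'⟩ h; simp [Prod.ext_iff] at h ⊢; tauto)
      _ _ (fun ω => rfl)
  rw [h1, h2]; ring

lemma MI_comm (X : Ω → α) (Y : Ω → β) :
    MI μ X Y = MI μ Y X := by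
  unfold MI
  have h1 : H μ (fun ω => (X ω, Y ω)) = H μ (fun ω => (Y ω, X ω)) :=
    H_comp' μ (fun t : β × α => (t.2, t.1))
      (by rintro ⟨y, x⟩ ⟨y', x'⟩ h; simp [Prod.ext_iff] at h ⊢; tauto)
      _ _ (fun ω => rfl)
  rw [h1]; ring


lemma CMI_relabel2 {β' : Type*} [Fintype β'] (e : β → β') (he : Function.Injective e)
    (X : Ω → α) (Y : Ω → β) (Z : Ω → γ) :
    CMI μ X (fun ω => e (Y ω)) Z = CMI μ X Y Z := by
  unfold CMI
  have hYZ : H μ (fun ω => (e (Y ω), Z ω)) = H μ (fun ω => (Y ω, Z ω)) :=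
    H_comp' μ (fun t : β × γ => (e t.1, t.2))
      (by rintro ⟨b, c⟩ ⟨b', c'⟩ h; simp [Prod.ext_iff, he.eq_iff] at h ⊢; tauto)
      _ _ (fun ω => rfl)
  have hXYZ : H μ (fun ω => (X ω, e (Y ω), Z ω)) = H μ (fun ω => (X ω, Y ω, Z ω)) :=
    H_comp' μ (fun t : α × β × γ => (t.1, e t.2.1, t.2.2))
      (by rintro ⟨a, b, c⟩ ⟨a', b', c'⟩ h; simp [Prod.ext_iff, he.eq_iff] at h ⊢; tauto)
      _ _ (fun ω => rfl)
  rw [hYZ, hXYZ]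

lemma CMI_relabel3 {γ' : Type*} [Fintype γ'] (e : γ → γ') (he : Function.Injective e)
    (X : Ω → α) (Y : Ω → β) (Z : Ω → γ) :
    CMI μ X Y (fun ω => e (Z ω)) = CMI μ X Y Z := by
  unfold CMI
  have hXZ : H μ (fun ω => (X ω, e (Z ω))) = H μ (fun ω => (X ω, Z ω)) :=
    H_comp' μ (fun t : α × γ => (t.1, e t.2))
      (by rintro ⟨a, c⟩ ⟨a', c'⟩ h; simp [Prod.ext_iff, he.eq_iff] at h ⊢; tauto)
      _ _ (fun ω => rfl)
  have hYZ : H μ (fun ω => (Y ω, e (Z ω))) = H μ (fun ω => (Y ω, Z ω)) :=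
    H_comp' μ (fun t : β × γ => (t.1, e t.2))
      (by rintro ⟨b, c⟩ ⟨b', c'⟩ h; simp [Prod.ext_iff, he.eq_iff] at h ⊢; tauto)
      _ _ (fun ω => rfl)
  have hXYZ : H μ (fun ω => (X ω, Y ω, e (Z ω))) = H μ (fun ω => (X ω, Y ω, Z ω)) :=
    H_comp' μ (fun t : α × β × γ => (t.1, t.2.1, e t.2.2))
      (by rintro ⟨a, b, c⟩ ⟨a', b', c'⟩ h; simp [Prod.ext_iff, he.eq_iff] at h ⊢; tauto)
      _ _ (fun ω => rfl)
  have hZ : H μ (fun ω => e (Z ω)) = H μ Z := H_comp μ he Z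
  rw [hXZ, hYZ, hXYZ, hZ]

lemma H_fin1 (h1 : ∑ ω, μ ω = 1) : H μ (fun _ : Ω => (0 : Fin 1)) = 0 := by
  classical
  have hd : dist μ (fun _ : Ω => (0 : Fin 1)) 0 = 1 := by
    rw [dist_eq]; simpa using h1
  unfold H
  rw [Fin.sum_univ_one, hd]
  simp

lemma MI_eq_CMI_fin1 (h1 : ∑ ω, μ ω = 1) (X : Ω → α) (Y : Ω → β) :
    MI μ X Y = CMI μ X Y (fun _ : Ω => (0 : Fin 1)) := by
  unfold MI CMI
  have hX : H μ (fun ω => (X ω, (0 : Fin 1))) = H μ X :=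
    H_comp' μ (fun a : α => (a, (0 : Fin 1)))
      (fun a a' h => congrArg Prod.fst h) _ _ (fun ω => rfl)
  have hY : H μ (fun ω => (Y ω, (0 : Fin 1))) = H μ Y :=
    H_comp' μ (fun b : β => (b, (0 : Fin 1)))
      (fun a a' h => congrArg Prod.fst h) _ _ (fun ω => rfl)
  have hXY : H μ (fun ω => (X ω, Y ω, (0 : Fin 1))) = H μ (fun ω => (X ω, Y ω)) :=
    H_comp' μ (fun t : α × β => (t.1, t.2, (0 : Fin 1)))
      (by rintro ⟨a, b⟩ ⟨a', b'⟩ h; simp [Prod.ext_iff] at h ⊢; tauto)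
      _ _ (fun ω => rfl)
  rw [hX, hY, hXY, H_fin1 μ h1]
  ring

lemma CMI_nonneg (hμ : IsPMF μ) (X : Ω → α) (Y : Ω → β) (Z : Ω → γ) :
    0 ≤ CMI μ X Y Z := by
  classical
  obtain ⟨hμ0, hμ1⟩ := hμ
  -- joint and marginal pmfs
  have hpnn : ∀ t, 0 ≤ dist μ (fun ω => (X ω, Y ω, Z ω)) t := dist_nonneg μ hμ0 _
  have hpsum : ∑ t, dist μ (fun ω => (X ω, Y ω, Z ω)) t = 1 := by
    rw [sum_dist, hμ1]
  have hq1 : ∀ x z, dist μ (fun ω => (X ω, Z ω)) (x, z)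
      = ∑ y, dist μ (fun ω => (X ω, Y ω, Z ω)) (x, y, z) := by
    intro x z
    have hcomp : dist μ (fun ω => (X ω, Z ω)) (x, z) = ∑ a : α × β × γ,
        if (a.1, a.2.2) = (x, z) then dist μ (fun ω => (X ω, Y ω, Z ω)) a else 0 :=
      dist_comp μ (fun t : α × β × γ => (t.1, t.2.2)) (fun ω => (X ω, Y ω, Z ω)) (x, z)
    rw [hcomp, Fintype.sum_prod_type]
    simp_rw [Fintype.sum_prod_type]
    have h1 : ∀ a b, (∑ c, if (a, c) = (x, z)
        then dist μ (fun ω => (X ω, Y ω, Z ω)) (a, b, c) else 0)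
        = if a = x then dist μ (fun ω => (X ω, Y ω, Z ω)) (a, b, z) else 0 := by
      intro a b; by_cases h : a = x <;> simp [h, Prod.ext_iff]
    simp_rw [h1]
    have h2 : ∀ a, (∑ b, if a = x then dist μ (fun ω => (X ω, Y ω, Z ω)) (a, b, z) else 0)
        = if a = x then ∑ b, dist μ (fun ω => (X ω, Y ω, Z ω)) (a, b, z) else 0 := by
      intro a; split <;> simp
    simp_rw [h2]
    simp
  have hq2 : ∀ y z, dist μ (fun ω => (Y ω, Z ω)) (y, z)
      = ∑ x, dist μ (fun ω => (X ω, Y ω, Z ω)) (x, y, z) := by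
    intro y z
    have hcomp : dist μ (fun ω => (Y ω, Z ω)) (y, z) = ∑ a : α × β × γ,
        if (a.2.1, a.2.2) = (y, z) then dist μ (fun ω => (X ω, Y ω, Z ω)) a else 0 :=
      dist_comp μ (fun t : α × β × γ => (t.2.1, t.2.2)) (fun ω => (X ω, Y ω, Z ω)) (y, z)
    rw [hcomp, Fintype.sum_prod_type]
    simp_rw [Fintype.sum_prod_type]
    have h1 : ∀ a b, (∑ c, if (b, c) = (y, z)
        then dist μ (fun ω => (X ω, Y ω, Z ω)) (a, b, c) else 0)
        = if b = y then dist μ (fun ω => (X ω, Y ω, Z ω)) (a, b, z) else 0 := by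
      intro a b; by_cases h : b = y <;> simp [h, Prod.ext_iff]
    simp_rw [h1]
    simp
  have hr : ∀ z, dist μ Z z
      = ∑ x, ∑ y, dist μ (fun ω => (X ω, Y ω, Z ω)) (x, y, z) := by
    intro z
    have hcomp : dist μ Z z = ∑ a : α × β × γ,
        if a.2.2 = z then dist μ (fun ω => (X ω, Y ω, Z ω)) a else 0 :=
      dist_comp μ (fun t : α × β × γ => t.2.2) (fun ω => (X ω, Y ω, Z ω)) z
    rw [hcomp, Fintype.sum_prod_type]
    simp_rw [Fintype.sum_prod_type]
    simp
  -- entropy expansions as triple sums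
  have hA : (∑ t : α × β × γ, dist μ (fun ω => (X ω, Y ω, Z ω)) t
        * Real.logb 2 (dist μ (fun ω => (X ω, Z ω)) (t.1, t.2.2)))
      = ∑ s : α × γ, dist μ (fun ω => (X ω, Z ω)) s
        * Real.logb 2 (dist μ (fun ω => (X ω, Z ω)) s) := by
    rw [Fintype.sum_prod_type]
    simp_rw [Fintype.sum_prod_type]
    congr 1
    ext a
    rw [Finset.sum_comm]
    congr 1
    ext c
    rw [← Finset.sum_mul, ← hq1 a c]
  have hB : (∑ t : α × β × γ, dist μ (fun ω => (X ω, Y ω, Z ω)) t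
        * Real.logb 2 (dist μ (fun ω => (Y ω, Z ω)) (t.2.1, t.2.2)))
      = ∑ s : β × γ, dist μ (fun ω => (Y ω, Z ω)) s
        * Real.logb 2 (dist μ (fun ω => (Y ω, Z ω)) s) := by
    rw [Fintype.sum_prod_type]
    simp_rw [Fintype.sum_prod_type]
    rw [Finset.sum_comm]
    congr 1
    ext b
    rw [Finset.sum_comm]
    congr 1
    ext c
    rw [← Finset.sum_mul, ← hq2 b c]
  have hC : (∑ t : α × β × γ, dist μ (fun ω => (X ω, Y ω, Z ω)) t
        * Real.logb 2 (dist μ Z t.2.2))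
      = ∑ z, dist μ Z z * Real.logb 2 (dist μ Z z) := by
    rw [Fintype.sum_prod_type]
    simp_rw [Fintype.sum_prod_type]
    have : ∀ a : α, (∑ b : β, ∑ c : γ, dist μ (fun ω => (X ω, Y ω, Z ω)) (a, b, c)
        * Real.logb 2 (dist μ Z c))
        = ∑ c : γ, (∑ b : β, dist μ (fun ω => (X ω, Y ω, Z ω)) (a, b, c))
          * Real.logb 2 (dist μ Z c) := by
      intro a
      rw [Finset.sum_comm]
      congr 1; ext c
      rw [← Finset.sum_mul]
    simp_rw [this]
    rw [Finset.sum_comm]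
    congr 1; ext c
    rw [← Finset.sum_mul]
    congr 1
    rw [hr c]
  have hCMI : CMI μ X Y Z = ∑ t : α × β × γ, dist μ (fun ω => (X ω, Y ω, Z ω)) t
      * (Real.logb 2 (dist μ (fun ω => (X ω, Y ω, Z ω)) t)
        + Real.logb 2 (dist μ Z t.2.2)
        - Real.logb 2 (dist μ (fun ω => (X ω, Z ω)) (t.1, t.2.2))
        - Real.logb 2 (dist μ (fun ω => (Y ω, Z ω)) (t.2.1, t.2.2))) := by
    unfold CMI H
    simp only [mul_add, mul_sub, Finset.sum_add_distrib, Finset.sum_sub_distrib]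
    rw [hA, hB, hC]
    ring
  set p : α × β × γ → ℝ := dist μ (fun ω => (X ω, Y ω, Z ω)) with hpdef
  set q1 : α × γ → ℝ := dist μ (fun ω => (X ω, Z ω)) with hq1def
  set q2 : β × γ → ℝ := dist μ (fun ω => (Y ω, Z ω)) with hq2def
  set r : γ → ℝ := dist μ Z with hrdef
  set S : Finset (α × β × γ) := Finset.univ.filter (fun t => 0 < p t) with hSdef
  have hq1nn : ∀ s, 0 ≤ q1 s := dist_nonneg μ hμ0 _
  have hq2nn : ∀ s, 0 ≤ q2 s := dist_nonneg μ hμ0 _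
  have hrnn : ∀ z, 0 ≤ r z := dist_nonneg μ hμ0 _
  have hpzero : ∀ t, t ∉ S → p t = 0 := by
    intro t ht
    simp only [hSdef, Finset.mem_filter, Finset.mem_univ, true_and, not_lt] at ht
    exact le_antisymm ht (hpnn t)
  have hsum_S : ∑ t ∈ S, p t = 1 := by
    rw [← hpsum]
    exact Finset.sum_subset (Finset.filter_subset _ _) (fun t _ ht => hpzero t ht)
  -- positivity of marginals on the support
  have hppos : ∀ t ∈ S, 0 < p t := by
    intro t ht
    simpa [hSdef] using (Finset.mem_filter.mp ht).2
  have hq1pos : ∀ t ∈ S, 0 < q1 (t.1, t.2.2) := by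
    intro t ht
    have h1 : p t ≤ q1 (t.1, t.2.2) := by
      rw [hq1 t.1 t.2.2]
      exact Finset.single_le_sum (f := fun y => p (t.1, y, t.2.2))
        (fun y _ => hpnn _) (Finset.mem_univ t.2.1)
    exact lt_of_lt_of_le (hppos t ht) h1
  have hq2pos : ∀ t ∈ S, 0 < q2 (t.2.1, t.2.2) := by
    intro t ht
    have h1 : p t ≤ q2 (t.2.1, t.2.2) := by
      rw [hq2 t.2.1 t.2.2]
      exact Finset.single_le_sum (f := fun x => p (x, t.2.1, t.2.2))
        (fun x _ => hpnn _) (Finset.mem_univ t.1)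
    exact lt_of_lt_of_le (hppos t ht) h1
  have hrpos : ∀ t ∈ S, 0 < r t.2.2 := by
    intro t ht
    have h1 : q2 (t.2.1, t.2.2) ≤ r t.2.2 := by
      rw [hr t.2.2]
      rw [Finset.sum_comm]
      have := Finset.single_le_sum (f := fun y => ∑ x, p (x, y, t.2.2))
        (fun y _ => Finset.sum_nonneg (fun x _ => hpnn _)) (Finset.mem_univ t.2.1)
      calc q2 (t.2.1, t.2.2) = ∑ x, p (x, t.2.1, t.2.2) := hq2 _ _
        _ ≤ _ := this
    exact lt_of_lt_of_le (hq2pos t ht) h1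
  set θ : α × β × γ → ℝ :=
    fun t => q1 (t.1, t.2.2) * q2 (t.2.1, t.2.2) / (p t * r t.2.2) with hθdef
  have hθpos : ∀ t ∈ S, 0 < θ t := by
    intro t ht
    exact div_pos (mul_pos (hq1pos t ht) (hq2pos t ht))
      (mul_pos (hppos t ht) (hrpos t ht))
  -- restrict CMI to the support and rewrite each term via θ
  have hCMI2 : CMI μ X Y Z = -(∑ t ∈ S, p t * Real.log (θ t)) / Real.log 2 := by
    rw [hCMI]
    rw [← Finset.sum_subset (Finset.filter_subset (fun t => 0 < p t) Finset.univ)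
      (fun t _ ht => by rw [hpzero t ht, zero_mul])]
    rw [neg_div, Finset.sum_div, ← Finset.sum_neg_distrib, ← hSdef]
    apply Finset.sum_congr rfl
    intro t ht
    have hp' := (hppos t ht).ne'
    have hq1' := (hq1pos t ht).ne'
    have hq2' := (hq2pos t ht).ne'
    have hr' := (hrpos t ht).ne'
    have hl2ne : Real.log 2 ≠ 0 := (Real.log_pos one_lt_two).ne'
    have hθval : Real.log (θ t) = Real.log (q1 (t.1, t.2.2)) + Real.log (q2 (t.2.1, t.2.2))
        - (Real.log (p t) + Real.log (r t.2.2)) := by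
      rw [hθdef]
      rw [Real.log_div (by positivity) (by positivity), Real.log_mul hq1' hq2',
        Real.log_mul hp' hr']
    rw [hθval]
    unfold Real.logb
    field_simp
    ring
  -- Jensen's inequality
  have hjensen : ∑ t ∈ S, p t * Real.log (θ t) ≤ Real.log (∑ t ∈ S, p t * θ t) := by
    have := (strictConcaveOn_log_Ioi.concaveOn).le_map_sum
      (t := S) (w := p) (p := θ) (fun t ht => hpnn t) hsum_S
      (fun t ht => Set.mem_Ioi.mpr (hθpos t ht))
    simpa [smul_eq_mul] using this
  -- the expected value of θ is at most 1
  have hbound : ∑ t ∈ S, p t * θ t ≤ 1 := by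
    have hterm : ∀ t ∈ S, p t * θ t
        = q1 (t.1, t.2.2) * q2 (t.2.1, t.2.2) / r t.2.2 := by
      intro t ht
      have hp' := (hppos t ht).ne'
      rw [hθdef]
      calc p t * (q1 (t.1, t.2.2) * q2 (t.2.1, t.2.2) / (p t * r t.2.2))
          = (q1 (t.1, t.2.2) * q2 (t.2.1, t.2.2) / r t.2.2) * (p t / p t) := by ring
        _ = q1 (t.1, t.2.2) * q2 (t.2.1, t.2.2) / r t.2.2 := by
            rw [div_self hp', mul_one]
    rw [Finset.sum_congr rfl hterm]
    have hstep2 : ∑ t ∈ S, q1 (t.1, t.2.2) * q2 (t.2.1, t.2.2) / r t.2.2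
        ≤ ∑ t : α × β × γ, q1 (t.1, t.2.2) * q2 (t.2.1, t.2.2) / r t.2.2 :=
      Finset.sum_le_sum_of_subset_of_nonneg (Finset.filter_subset _ _)
        (fun t _ _ => div_nonneg (mul_nonneg (hq1nn _) (hq2nn _)) (hrnn _))
    refine hstep2.trans ?_
    have hsplit : (∑ t : α × β × γ, q1 (t.1, t.2.2) * q2 (t.2.1, t.2.2) / r t.2.2)
        = ∑ c : γ, ∑ a : α, ∑ b : β, q1 (a, c) * q2 (b, c) / r c := by
      rw [Fintype.sum_prod_type]
      simp_rw [Fintype.sum_prod_type]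
      have hsw1 : ∀ a : α, (∑ b : β, ∑ c : γ, q1 (a, c) * q2 (b, c) / r c)
          = ∑ c : γ, ∑ b : β, q1 (a, c) * q2 (b, c) / r c := fun a => Finset.sum_comm
      simp_rw [hsw1]
      rw [Finset.sum_comm]
    rw [hsplit]
    have hq1sum : ∀ c, ∑ a, q1 (a, c) = r c := by
      intro c
      rw [hr c]
      exact Finset.sum_congr rfl (fun a _ => hq1 a c)
    have hq2sum : ∀ c, ∑ b, q2 (b, c) = r c := by
      intro c
      rw [hr c, Finset.sum_comm]
      exact Finset.sum_congr rfl (fun b _ => hq2 b c)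
    have hperz : ∀ c : γ, (∑ a : α, ∑ b : β, q1 (a, c) * q2 (b, c) / r c) ≤ r c := by
      intro c
      by_cases h0 : r c = 0
      · have hq1z : ∀ a, q1 (a, c) = 0 := by
          intro a
          have hle : q1 (a, c) ≤ ∑ a', q1 (a', c) :=
            Finset.single_le_sum (f := fun a' => q1 (a', c))
              (fun a' _ => hq1nn _) (Finset.mem_univ a)
          rw [hq1sum c, h0] at hle
          exact le_antisymm hle (hq1nn _)
        rw [h0]
        apply le_of_eq
        apply Finset.sum_eq_zero
        intro a _
        apply Finset.sum_eq_zero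
        intro b _
        rw [hq1z a, zero_mul, zero_div]
      · have hrpos' : 0 < r c := lt_of_le_of_ne (hrnn c) (Ne.symm h0)
        have : (∑ a : α, ∑ b : β, q1 (a, c) * q2 (b, c) / r c)
            = (∑ a, q1 (a, c)) * (∑ b, q2 (b, c)) / r c := by
          rw [Finset.sum_mul, Finset.sum_div]
          apply Finset.sum_congr rfl
          intro a _
          rw [Finset.mul_sum, Finset.sum_div]
        rw [this, hq1sum, hq2sum]
        rw [mul_div_assoc, div_self h0, mul_one]
    calc ∑ c : γ, ∑ a : α, ∑ b : β, q1 (a, c) * q2 (b, c) / r c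
        ≤ ∑ c, r c := Finset.sum_le_sum (fun c _ => hperz c)
      _ = 1 := by rw [hrdef, sum_dist, hμ1]
  -- put everything together
  have hsumθnn : 0 ≤ ∑ t ∈ S, p t * θ t :=
    Finset.sum_nonneg (fun t ht => mul_nonneg (hpnn t) (le_of_lt (hθpos t ht)))
  have hlogle : Real.log (∑ t ∈ S, p t * θ t) ≤ 0 := Real.log_nonpos hsumθnn hbound
  have hnum : ∑ t ∈ S, p t * Real.log (θ t) ≤ 0 := hjensen.trans hlogle
  rw [hCMI2]
  have hl2 : 0 < Real.log 2 := Real.log_pos one_lt_two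
  apply div_nonneg (by linarith) (le_of_lt hl2)

lemma MI_nonneg (hμ : IsPMF μ) (X : Ω → α) (Y : Ω → β) : 0 ≤ MI μ X Y := by
  rw [MI_eq_CMI_fin1 μ hμ.2 X Y]
  exact CMI_nonneg μ hμ X Y _

end


/-- Key step: `Y – (X1,U2) – X2` follows from independence and the Markov chain. -/
lemma markov_key {Ω U1 X1 U2 X2 Y : Type*}
    [Fintype Ω] [Fintype U1] [Fintype X1] [Fintype U2] [Fintype X2] [Fintype Y]
    (μ : Ω → ℝ) (hμ : IsPMF μ)
    (vU1 : Ω → U1) (vX1 : Ω → X1) (vU2 : Ω → U2) (vX2 : Ω → X2) (vY : Ω → Y)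
    (hindep : MI μ (fun ω => (vU1 ω, vX1 ω)) (fun ω => (vU2 ω, vX2 ω)) = 0)
    (hmarkov : CMI μ vY (fun ω => (vX1 ω, vX2 ω)) (fun ω => (vU1 ω, vU2 ω)) = 0) :
    CMI μ vY vX2 (fun ω => (vX1 ω, vU2 ω)) = 0 := by
  -- Step 1 : I(X2 ; U1,X1 | U2) = 0
  have hc1 := MI_chain μ (fun ω => (vU1 ω, vX1 ω)) vU2 vX2
  have hmn := MI_nonneg μ hμ (fun ω => (vU1 ω, vX1 ω)) vU2
  have hcn1 := CMI_nonneg μ hμ (fun ω => (vU1 ω, vX1 ω)) vX2 vU2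
  have h1 : CMI μ (fun ω => (vU1 ω, vX1 ω)) vX2 vU2 = 0 := by linarith
  have h1c : CMI μ vX2 (fun ω => (vU1 ω, vX1 ω)) vU2 = 0 :=
    (CMI_comm μ vX2 (fun ω => (vU1 ω, vX1 ω)) vU2).trans h1
  -- Step 2 : I(Y ; X2 | X1,U1,U2) = 0
  have hc2 := CMI_chain μ vY vX1 vX2 (fun ω => (vU1 ω, vU2 ω))
  have hcn2 := CMI_nonneg μ hμ vY vX1 (fun ω => (vU1 ω, vU2 ω))
  have hcn3 := CMI_nonneg μ hμ vY vX2 (fun ω => (vX1 ω, vU1 ω, vU2 ω))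
  have h2 : CMI μ vY vX2 (fun ω => (vX1 ω, vU1 ω, vU2 ω)) = 0 := by linarith
  have h2c : CMI μ vX2 vY (fun ω => (vX1 ω, vU1 ω, vU2 ω)) = 0 :=
    (CMI_comm μ vX2 vY _).trans h2
  -- Relabel the conditioning variables
  have hrel1 : CMI μ vX2 vY (fun ω => ((vU1 ω, vX1 ω), vU2 ω))
      = CMI μ vX2 vY (fun ω => (vU1 ω, vX1 ω, vU2 ω)) :=
    CMI_relabel3 μ (fun t : U1 × X1 × U2 => ((t.1, t.2.1), t.2.2))
      (by rintro ⟨a, b, c⟩ ⟨a', b', c'⟩ h; simp [Prod.ext_iff] at h ⊢; tauto)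
      vX2 vY (fun ω => (vU1 ω, vX1 ω, vU2 ω))
  have hrel2 : CMI μ vX2 vY (fun ω => (vX1 ω, vU1 ω, vU2 ω))
      = CMI μ vX2 vY (fun ω => (vU1 ω, vX1 ω, vU2 ω)) :=
    CMI_relabel3 μ (fun t : U1 × X1 × U2 => (t.2.1, t.1, t.2.2))
      (by rintro ⟨a, b, c⟩ ⟨a', b', c'⟩ h; simp [Prod.ext_iff] at h ⊢; tauto)
      vX2 vY (fun ω => (vU1 ω, vX1 ω, vU2 ω))
  have hcond : CMI μ vX2 vY (fun ω => ((vU1 ω, vX1 ω), vU2 ω)) = 0 :=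
    hrel1.trans (hrel2.symm.trans h2c)
  -- Step 3 : I(X2 ; (U1,X1),Y | U2) = 0
  have hc4 := CMI_chain μ vX2 (fun ω => (vU1 ω, vX1 ω)) vY vU2
  have h5 : CMI μ vX2 (fun ω => ((vU1 ω, vX1 ω), vY ω)) vU2 = 0 := by
    rw [hc4, h1c, hcond]; ring
  -- Step 4 : reorder the second argument
  have hrelA : CMI μ vX2 (fun ω => ((vU1 ω, vX1 ω), vY ω)) vU2
      = CMI μ vX2 (fun ω => (vU1 ω, vX1 ω, vY ω)) vU2 :=
    CMI_relabel2 μ (fun t : U1 × X1 × Y => ((t.1, t.2.1), t.2.2))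
      (by rintro ⟨a, b, c⟩ ⟨a', b', c'⟩ h; simp [Prod.ext_iff] at h ⊢; tauto)
      vX2 (fun ω => (vU1 ω, vX1 ω, vY ω)) vU2
  have hrelB : CMI μ vX2 (fun ω => ((vX1 ω, vY ω), vU1 ω)) vU2
      = CMI μ vX2 (fun ω => (vU1 ω, vX1 ω, vY ω)) vU2 :=
    CMI_relabel2 μ (fun t : U1 × X1 × Y => ((t.2.1, t.2.2), t.1))
      (by rintro ⟨a, b, c⟩ ⟨a', b', c'⟩ h; simp [Prod.ext_iff] at h ⊢; tauto)
      vX2 (fun ω => (vU1 ω, vX1 ω, vY ω)) vU2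
  have h6 : CMI μ vX2 (fun ω => ((vX1 ω, vY ω), vU1 ω)) vU2 = 0 :=
    hrelB.trans (hrelA.symm.trans h5)
  -- Step 5 : I(X2 ; X1,Y | U2) = 0
  have hc6 := CMI_chain μ vX2 (fun ω => (vX1 ω, vY ω)) vU1 vU2
  have hcn4 := CMI_nonneg μ hμ vX2 (fun ω => (vX1 ω, vY ω)) vU2
  have hcn5 := CMI_nonneg μ hμ vX2 vU1 (fun ω => ((vX1 ω, vY ω), vU2 ω))
  have h7 : CMI μ vX2 (fun ω => (vX1 ω, vY ω)) vU2 = 0 := by linarith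
  -- Step 6 : I(X2 ; Y | X1,U2) = 0
  have hc7 := CMI_chain μ vX2 vX1 vY vU2
  have hcn6 := CMI_nonneg μ hμ vX2 vX1 vU2
  have hcn7 := CMI_nonneg μ hμ vX2 vY (fun ω => (vX1 ω, vU2 ω))
  have h8 : CMI μ vX2 vY (fun ω => (vX1 ω, vU2 ω)) = 0 := by linarith
  exact (CMI_comm μ vY vX2 (fun ω => (vX1 ω, vU2 ω))).trans h8

/-- **Markov chain lemma** (used in the converse of Proposition 1).
If `(U1, X1)` is independent of `(U2, X2)` and `Y – (U1,U2) – (X1,X2)` is a Markov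
chain, then `Y – (X1,U2) – X2` and `Y – (X2,U1) – X1` are Markov chains. -/
theorem markov_chain_lemma {Ω U1 X1 U2 X2 Y : Type}
    [Fintype Ω] [Fintype U1] [Fintype X1] [Fintype U2] [Fintype X2] [Fintype Y]
    (μ : Ω → ℝ) (hμ : IsPMF μ)
    (vU1 : Ω → U1) (vX1 : Ω → X1) (vU2 : Ω → U2) (vX2 : Ω → X2) (vY : Ω → Y)
    (hindep : MI μ (fun ω => (vU1 ω, vX1 ω)) (fun ω => (vU2 ω, vX2 ω)) = 0)
    (hmarkov : CMI μ vY (fun ω => (vX1 ω, vX2 ω)) (fun ω => (vU1 ω, vU2 ω)) = 0) :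
    CMI μ vY vX2 (fun ω => (vX1 ω, vU2 ω)) = 0 ∧
      CMI μ vY vX1 (fun ω => (vX2 ω, vU1 ω)) = 0 := by
  constructor
  · exact markov_key μ hμ vU1 vX1 vU2 vX2 vY hindep hmarkov
  · have hindep2 : MI μ (fun ω => (vU2 ω, vX2 ω)) (fun ω => (vU1 ω, vX1 ω)) = 0 :=
      (MI_comm μ (fun ω => (vU2 ω, vX2 ω)) (fun ω => (vU1 ω, vX1 ω))).trans hindep
    have hswap2 : CMI μ vY (fun ω => (vX2 ω, vX1 ω)) (fun ω => (vU2 ω, vU1 ω))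
        = CMI μ vY (fun ω => (vX1 ω, vX2 ω)) (fun ω => (vU2 ω, vU1 ω)) :=
      CMI_relabel2 μ (fun t : X1 × X2 => (t.2, t.1))
        (by rintro ⟨a, b⟩ ⟨a', b'⟩ h; simp [Prod.ext_iff] at h ⊢; tauto)
        vY (fun ω => (vX1 ω, vX2 ω)) (fun ω => (vU2 ω, vU1 ω))
    have hswap3 : CMI μ vY (fun ω => (vX1 ω, vX2 ω)) (fun ω => (vU2 ω, vU1 ω))
        = CMI μ vY (fun ω => (vX1 ω, vX2 ω)) (fun ω => (vU1 ω, vU2 ω)) :=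
      CMI_relabel3 μ (fun t : U1 × U2 => (t.2, t.1))
        (by rintro ⟨a, b⟩ ⟨a', b'⟩ h; simp [Prod.ext_iff] at h ⊢; tauto)
        vY (fun ω => (vX1 ω, vX2 ω)) (fun ω => (vU1 ω, vU2 ω))
    have hmarkov2 : CMI μ vY (fun ω => (vX2 ω, vX1 ω)) (fun ω => (vU2 ω, vU1 ω)) = 0 :=
      hswap2.trans (hswap3.trans hmarkov)
    exact markov_key μ hμ vU2 vX2 vU1 vX1 vY hindep2 hmarkov2


end SecCoord
end

section
/- Perturbation preservation lemma (Appendix B, cardinality bounds). Let p be a joint pmf on finite alphabets factoring as p(x1,x2,w,u1,u2,x̃1,x̃2,z̃,y) = p(w)p(x1|w)p(x2|w)·p(u1|x1)p(u2|x2)·p(x̃1)p(x̃2)·p(z̃|x̃1,x̃2)·p(y|u1,u2,w). Let φ: 𝒰1 → ℝ satisfy ∑_{u1} p(u1|x1,x2,w,y)·φ(u1) = 0 for all (x1,x2,w,y) with p(x1,x2,w,y) > 0, and let ε be such that 1 + ε·φ(u1) ≥ 0 for all u1 and ∑_{u1} p(u1)φ(u1) = 0. Define p_ε(x1,x2,w,u1,u2,x̃1,x̃2,z̃,y)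 = p(x1,x2,w,u1,u2,x̃1,x̃2,z̃,y)·(1 + ε·φ(u1)). Then p_ε is a valid pmf; its (X1,X2,W,Y)-marginal equals that of p; its (U2,X2,W)-marginal equals that of p; and p_ε factors as p(w)p(x1|w)p(x2|w)·p_ε(u1|x1)·p(u2|x2)·p(x̃1)p(x̃2)·p(z̃|x̃1,x̃2)·p(y|u1,u2,w), where p_ε(u1|x1) = p(u1|x1)(1 + ε·φ(u1)). Moreover, a nonzero φ satisfying these conditional mean-zero constraints exists whenever |𝒰1| > |𝒳1||𝒳2||𝒲||𝒴|. -/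
open scoped BigOperators

namespace SecCoord

section Aux

lemma aux_swap {U2 Yt U1 : Type} [Fintype U2] [Fintype Yt] [Fintype U1]
    (C : ℝ) (pU1 : U1 → ℝ) (pU2 : U2 → ℝ) (pYk : U1 → U2 → Yt → ℝ)
    (hU2 : ∑ u2, pU2 u2 = 1) (hYk : ∀ u1 u2, ∑ y, pYk u1 u2 y = 1) (φ : U1 → ℝ) :
    ∑ y : Yt, ∑ u1 : U1, C * pU1 u1 * (∑ u2, pU2 u2 * pYk u1 u2 y) * φ u1
      = C * ∑ u1, pU1 u1 * φ u1 := by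
  rw [Finset.sum_comm]
  rw [Finset.mul_sum]
  refine Finset.sum_congr rfl fun u1 _ => ?_
  calc ∑ y : Yt, C * pU1 u1 * (∑ u2, pU2 u2 * pYk u1 u2 y) * φ u1
      = ∑ y : Yt, ∑ u2 : U2, C * pU1 u1 * φ u1 * (pU2 u2 * pYk u1 u2 y) := by
        refine Finset.sum_congr rfl fun y _ => ?_
        rw [Finset.mul_sum, Finset.sum_mul]
        exact Finset.sum_congr rfl fun u2 _ => by ring
    _ = ∑ u2 : U2, ∑ y : Yt, C * pU1 u1 * φ u1 * (pU2 u2 * pYk u1 u2 y) := Finset.sum_comm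
    _ = ∑ u2 : U2, C * pU1 u1 * φ u1 * pU2 u2 := by
        refine Finset.sum_congr rfl fun u2 _ => ?_
        rw [← Finset.mul_sum, ← Finset.mul_sum, hYk, mul_one]
    _ = C * (pU1 u1 * φ u1) := by
        rw [← Finset.mul_sum, hU2, mul_one]; ring

lemma perturb_cancel {U1 : Type} [Fintype U1] (T φ : U1 → ℝ) (ε : ℝ)
    (h : ∑ u, T u * φ u = 0) :
    ∑ u, T u * (1 + ε * φ u) = ∑ u, T u := by
  have h2 : ∀ u ∈ Finset.univ, T u * (1 + ε * φ u) = T u + ε * (T u * φ u) :=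
    fun u _ => by ring
  rw [Finset.sum_congr rfl h2, Finset.sum_add_distrib, ← Finset.mul_sum, h, mul_zero, add_zero]

lemma sum_rot3 {α β γ : Type} [Fintype α] [Fintype β] [Fintype γ] (F : α → β → γ → ℝ) :
    ∑ a, ∑ b, ∑ c, F a b c = ∑ c, ∑ a, ∑ b, F a b c := by
  calc ∑ a, ∑ b, ∑ c, F a b c
      = ∑ a, ∑ c, ∑ b, F a b c := Finset.sum_congr rfl fun a _ => Finset.sum_comm
    _ = ∑ c, ∑ a, ∑ b, F a b c := Finset.sum_comm

end Aux

section Perturbation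

variable {X1 X2 W Y U1 U2 A1 A2 Zt : Type}
  [Fintype X1] [Fintype X2] [Fintype W] [Fintype Y] [Fintype U1] [Fintype U2]
  [Fintype A1] [Fintype A2] [Fintype Zt]

/-- **Perturbation preservation lemma** (Appendix B, cardinality bounds).  Perturbing
the `U1`-component of the factorized pmf `p` by `(1 + ε φ(u1))`, where `φ` has zero
conditional mean given `(X1, X2, W, Y)`, yields a valid pmf with the same
`(X1,X2,W,Y)`- and `(U2,X2,W)`-marginals and the same factorization structure with
`p_ε(u1|x1) = p(u1|x1)(1 + ε φ(u1))`; moreover a nonzero such `φ` exists whenever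
`|𝒰1| > |𝒳1||𝒳2||𝒲||𝒴|`. -/
theorem perturbation_preservation
    (pW : W → ℝ) (hpW : IsPMF pW)
    (pX1W : W → X1 → ℝ) (hpX1W : ∀ w, IsPMF (pX1W w))
    (pX2W : W → X2 → ℝ) (hpX2W : ∀ w, IsPMF (pX2W w))
    (pU1 : X1 → U1 → ℝ) (hpU1 : ∀ x, IsPMF (pU1 x))
    (pU2 : X2 → U2 → ℝ) (hpU2 : ∀ x, IsPMF (pU2 x))
    (pA1 : A1 → ℝ) (hpA1 : IsPMF pA1)
    (pA2 : A2 → ℝ) (hpA2 : IsPMF pA2)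
    (pZc : A1 × A2 → Zt → ℝ) (hpZc : ∀ a, IsPMF (pZc a))
    (pYk : U1 → U2 → W → Y → ℝ) (hpYk : ∀ u1 u2 w, IsPMF (pYk u1 u2 w))
    (p : X1 × X2 × W × U1 × U2 × A1 × A2 × Zt × Y → ℝ)
    (hp : ∀ x1 x2 w u1 u2 a1 a2 z y,
      p (x1, x2, w, u1, u2, a1, a2, z, y) =
        pW w * pX1W w x1 * pX2W w x2 * pU1 x1 u1 * pU2 x2 u2 *
          pA1 a1 * pA2 a2 * pZc (a1, a2) z * pYk u1 u2 w y)
    (φ : U1 → ℝ)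
    (hφ : ∀ x1 x2 w y,
      0 < (∑ u1 : U1, ∑ u2 : U2, ∑ a1 : A1, ∑ a2 : A2, ∑ z : Zt,
            p (x1, x2, w, u1, u2, a1, a2, z, y)) →
      (∑ u1 : U1, (∑ u2 : U2, ∑ a1 : A1, ∑ a2 : A2, ∑ z : Zt,
            p (x1, x2, w, u1, u2, a1, a2, z, y)) * φ u1) = 0)
    (ε : ℝ)
    (hε1 : ∀ u1, 0 ≤ 1 + ε * φ u1)
    (hε2 : ∑ u1 : U1,
      (∑ x1 : X1, ∑ x2 : X2, ∑ w : W, ∑ u2 : U2, ∑ a1 : A1, ∑ a2 : A2, ∑ z : Zt, ∑ y : Y,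
        p (x1, x2, w, u1, u2, a1, a2, z, y)) * φ u1 = 0)
    (pe : X1 × X2 × W × U1 × U2 × A1 × A2 × Zt × Y → ℝ)
    (hpe : ∀ x1 x2 w u1 u2 a1 a2 z y,
      pe (x1, x2, w, u1, u2, a1, a2, z, y) =
        p (x1, x2, w, u1, u2, a1, a2, z, y) * (1 + ε * φ u1)) :
    IsPMF pe ∧
    (∀ x1 x2 w y,
      (∑ u1 : U1, ∑ u2 : U2, ∑ a1 : A1, ∑ a2 : A2, ∑ z : Zt,
        pe (x1, x2, w, u1, u2, a1, a2, z, y)) =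
      (∑ u1 : U1, ∑ u2 : U2, ∑ a1 : A1, ∑ a2 : A2, ∑ z : Zt,
        p (x1, x2, w, u1, u2, a1, a2, z, y))) ∧
    (∀ u2 x2 w,
      (∑ x1 : X1, ∑ u1 : U1, ∑ a1 : A1, ∑ a2 : A2, ∑ z : Zt, ∑ y : Y,
        pe (x1, x2, w, u1, u2, a1, a2, z, y)) =
      (∑ x1 : X1, ∑ u1 : U1, ∑ a1 : A1, ∑ a2 : A2, ∑ z : Zt, ∑ y : Y,
        p (x1, x2, w, u1, u2, a1, a2, z, y))) ∧
    (∀ x1 x2 w u1 u2 a1 a2 z y,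
      pe (x1, x2, w, u1, u2, a1, a2, z, y) =
        pW w * pX1W w x1 * pX2W w x2 * (pU1 x1 u1 * (1 + ε * φ u1)) * pU2 x2 u2 *
          pA1 a1 * pA2 a2 * pZc (a1, a2) z * pYk u1 u2 w y) ∧
    (Fintype.card X1 * Fintype.card X2 * Fintype.card W * Fintype.card Y <
        Fintype.card U1 →
      ∃ ψ : U1 → ℝ, ψ ≠ 0 ∧ ∀ x1 x2 w y,
        0 < (∑ u1 : U1, ∑ u2 : U2, ∑ a1 : A1, ∑ a2 : A2, ∑ z : Zt,
              p (x1, x2, w, u1, u2, a1, a2, z, y)) →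
        (∑ u1 : U1, (∑ u2 : U2, ∑ a1 : A1, ∑ a2 : A2, ∑ z : Zt,
              p (x1, x2, w, u1, u2, a1, a2, z, y)) * ψ u1) = 0) := by
  classical
  have sW := hpW.2
  -- nonnegativity of p
  have hp0 : ∀ q : X1 × X2 × W × U1 × U2 × A1 × A2 × Zt × Y, 0 ≤ p q := by
    rintro ⟨x1, x2, w, u1, u2, a1, a2, z, y⟩
    rw [hp]
    exact mul_nonneg (mul_nonneg (mul_nonneg (mul_nonneg (mul_nonneg (mul_nonneg
      (mul_nonneg (mul_nonneg (hpW.1 w) ((hpX1W w).1 x1)) ((hpX2W w).1 x2))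
      ((hpU1 x1).1 u1)) ((hpU2 x2).1 u2)) (hpA1.1 a1)) (hpA2.1 a2))
      ((hpZc (a1, a2)).1 z)) ((hpYk u1 u2 w).1 y)
  -- closed form for the (u2,a1,a2,z)-marginal at fixed (x1,x2,w,u1,y)
  have hm : ∀ x1 x2 w u1 y,
      (∑ u2 : U2, ∑ a1 : A1, ∑ a2 : A2, ∑ z : Zt, p (x1, x2, w, u1, u2, a1, a2, z, y))
        = pW w * pX1W w x1 * pX2W w x2 * pU1 x1 u1 * ∑ u2, pU2 x2 u2 * pYk u1 u2 w y := by
    intro x1 x2 w u1 y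
    simp only [hp, ← Finset.mul_sum, ← Finset.sum_mul, (hpZc _).2, hpA2.2, hpA1.2,
      mul_one, one_mul]
    rw [Finset.mul_sum]
    exact Finset.sum_congr rfl fun u2 _ => by ring
  -- closed form for the (u2,a1,a2,z,y)-marginal
  have hm2 : ∀ x1 x2 w u1,
      (∑ u2 : U2, ∑ a1 : A1, ∑ a2 : A2, ∑ z : Zt, ∑ y : Y, p (x1, x2, w, u1, u2, a1, a2, z, y))
        = pW w * pX1W w x1 * pX2W w x2 * pU1 x1 u1 := by
    intro x1 x2 w u1
    simp only [hp, ← Finset.mul_sum, ← Finset.sum_mul, (hpYk _ _ _).2, (hpZc _).2,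
      hpA2.2, hpA1.2, (hpU2 _).2, mul_one, one_mul]
  -- closed form for the (a1,a2,z,y)-marginal
  have hm3 : ∀ x1 x2 w u1 u2,
      (∑ a1 : A1, ∑ a2 : A2, ∑ z : Zt, ∑ y : Y, p (x1, x2, w, u1, u2, a1, a2, z, y))
        = pW w * pX1W w x1 * pX2W w x2 * pU1 x1 u1 * pU2 x2 u2 := by
    intro x1 x2 w u1 u2
    simp only [hp, ← Finset.mul_sum, ← Finset.sum_mul, (hpYk _ _ _).2, (hpZc _).2,
      hpA2.2, hpA1.2, mul_one, one_mul]
  -- nonnegativity of the (u2,a1,a2,z)-marginal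
  have hm0 : ∀ x1 x2 w u1 y,
      0 ≤ ∑ u2 : U2, ∑ a1 : A1, ∑ a2 : A2, ∑ z : Zt, p (x1, x2, w, u1, u2, a1, a2, z, y) := by
    intro x1 x2 w u1 y
    refine Finset.sum_nonneg fun u2 _ => Finset.sum_nonneg fun a1 _ =>
      Finset.sum_nonneg fun a2 _ => Finset.sum_nonneg fun z _ => hp0 _
  -- unconditional zero-mean property of φ
  have hφ' : ∀ x1 x2 w y,
      (∑ u1 : U1, (∑ u2 : U2, ∑ a1 : A1, ∑ a2 : A2, ∑ z : Zt,
        p (x1, x2, w, u1, u2, a1, a2, z, y)) * φ u1) = 0 := by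
    intro x1 x2 w y
    rcases eq_or_lt_of_le (Finset.sum_nonneg fun u1 _ => hm0 x1 x2 w u1 y) with h | h
    · have hz := (Finset.sum_eq_zero_iff_of_nonneg (fun u1 _ => hm0 x1 x2 w u1 y)).1 h.symm
      exact Finset.sum_eq_zero fun u1 _ => by
        rw [hz u1 (Finset.mem_univ _), zero_mul]
    · exact hφ x1 x2 w y h
  -- key collapse identity
  have key : ∀ x1 x2 w,
      ∑ y : Y, ∑ u1 : U1, (∑ u2 : U2, ∑ a1 : A1, ∑ a2 : A2, ∑ z : Zt,
          p (x1, x2, w, u1, u2, a1, a2, z, y)) * φ u1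
        = pW w * pX1W w x1 * pX2W w x2 * ∑ u1, pU1 x1 u1 * φ u1 := by
    intro x1 x2 w
    calc ∑ y : Y, ∑ u1 : U1, (∑ u2 : U2, ∑ a1 : A1, ∑ a2 : A2, ∑ z : Zt,
            p (x1, x2, w, u1, u2, a1, a2, z, y)) * φ u1
        = ∑ y : Y, ∑ u1 : U1, (pW w * pX1W w x1 * pX2W w x2) * pU1 x1 u1 *
            (∑ u2, pU2 x2 u2 * pYk u1 u2 w y) * φ u1 := by
          refine Finset.sum_congr rfl fun y _ => Finset.sum_congr rfl fun u1 _ => ?_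
          rw [hm]
      _ = (pW w * pX1W w x1 * pX2W w x2) * ∑ u1, pU1 x1 u1 * φ u1 :=
          aux_swap _ _ _ _ ((hpU2 x2).2) (fun u1 u2 => (hpYk u1 u2 w).2) φ
  -- pW w * pX1W w x1 * ∑ u1, pU1 x1 u1 * φ u1 = 0
  have hK : ∀ w x1, pW w * pX1W w x1 * (∑ u1, pU1 x1 u1 * φ u1) = 0 := by
    intro w x1
    have hex : ∃ x2, pX2W w x2 ≠ 0 := by
      by_contra h
      push_neg at h
      have h2 := (hpX2W w).2
      rw [Finset.sum_eq_zero fun x _ => h x] at h2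
      norm_num at h2
    obtain ⟨x2, hx2⟩ := hex
    have h1 : ∑ y : Y, ∑ u1 : U1, (∑ u2 : U2, ∑ a1 : A1, ∑ a2 : A2, ∑ z : Zt,
        p (x1, x2, w, u1, u2, a1, a2, z, y)) * φ u1 = 0 :=
      Finset.sum_eq_zero fun y _ => hφ' x1 x2 w y
    have h2 := (key x1 x2 w).symm.trans h1
    have h3 : (pW w * pX1W w x1 * ∑ u1, pU1 x1 u1 * φ u1) * pX2W w x2 = 0 := by
      linear_combination h2
    rcases mul_eq_zero.1 h3 with h4 | h4
    · exact h4
    · exact absurd h4 hx2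
  -- the perturbed sum over u1 of the triple-product term
  have hKpull : ∀ w x1 (c : ℝ),
      ∑ u1, (pW w * pX1W w x1 * c * pU1 x1 u1) * φ u1 = 0 := by
    intro w x1 c
    have : ∑ u1, (pW w * pX1W w x1 * c * pU1 x1 u1) * φ u1
        = c * (pW w * pX1W w x1 * ∑ u1, pU1 x1 u1 * φ u1) := by
      rw [Finset.mul_sum, Finset.mul_sum]
      exact Finset.sum_congr rfl fun u1 _ => by ring
    rw [this, hK, mul_zero]
  refine ⟨⟨?_, ?_⟩, ?_, ?_, ?_, ?_⟩
  · -- nonnegativity of pe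
    rintro ⟨x1, x2, w, u1, u2, a1, a2, z, y⟩
    rw [hpe]
    exact mul_nonneg (hp0 _) (hε1 u1)
  · -- total sum of pe is 1
    calc ∑ q : X1 × X2 × W × U1 × U2 × A1 × A2 × Zt × Y, pe q
        = ∑ x1 : X1, ∑ x2 : X2, ∑ w : W, ∑ u1 : U1,
            (∑ u2 : U2, ∑ a1 : A1, ∑ a2 : A2, ∑ z : Zt, ∑ y : Y,
              p (x1, x2, w, u1, u2, a1, a2, z, y)) * (1 + ε * φ u1) := by
          simp only [Fintype.sum_prod_type, hpe, ← Finset.sum_mul]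
      _ = ∑ x1 : X1, ∑ x2 : X2, ∑ w : W,
            ∑ u1 : U1, (pW w * pX1W w x1 * pX2W w x2 * pU1 x1 u1) * (1 + ε * φ u1) := by
          simp only [hm2]
      _ = ∑ x1 : X1, ∑ x2 : X2, ∑ w : W, pW w * pX1W w x1 * pX2W w x2 := by
          refine Finset.sum_congr rfl fun x1 _ => Finset.sum_congr rfl fun x2 _ =>
            Finset.sum_congr rfl fun w _ => ?_
          rw [perturb_cancel _ _ _ (hKpull w x1 (pX2W w x2)), ← Finset.mul_sum,
            (hpU1 x1).2, mul_one]
      _ = ∑ w : W, ∑ x1 : X1, ∑ x2 : X2, pW w * pX1W w x1 * pX2W w x2 := sum_rot3 _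
      _ = 1 := by
          simp only [← Finset.mul_sum, ← Finset.sum_mul, (hpX2W _).2, (hpX1W _).2,
            mul_one, one_mul, sW]
  · -- (X1,X2,W,Y)-marginal preserved
    intro x1 x2 w y
    have hpull : ∀ u1 : U1,
        (∑ u2 : U2, ∑ a1 : A1, ∑ a2 : A2, ∑ z : Zt, pe (x1, x2, w, u1, u2, a1, a2, z, y))
          = (∑ u2 : U2, ∑ a1 : A1, ∑ a2 : A2, ∑ z : Zt,
              p (x1, x2, w, u1, u2, a1, a2, z, y)) * (1 + ε * φ u1) := by
      intro u1
      simp only [hpe, ← Finset.sum_mul]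
    rw [Finset.sum_congr rfl fun u1 _ => hpull u1]
    exact perturb_cancel _ _ _ (hφ' x1 x2 w y)
  · -- (U2,X2,W)-marginal preserved
    intro u2 x2 w
    refine Finset.sum_congr rfl fun x1 _ => ?_
    have hpull : ∀ u1 : U1,
        (∑ a1 : A1, ∑ a2 : A2, ∑ z : Zt, ∑ y : Y, pe (x1, x2, w, u1, u2, a1, a2, z, y))
          = (pW w * pX1W w x1 * (pX2W w x2 * pU2 x2 u2) * pU1 x1 u1) * (1 + ε * φ u1) := by
      intro u1
      simp only [hpe, ← Finset.sum_mul]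
      rw [hm3]; ring_nf
    have hpull2 : ∀ u1 : U1,
        (∑ a1 : A1, ∑ a2 : A2, ∑ z : Zt, ∑ y : Y, p (x1, x2, w, u1, u2, a1, a2, z, y))
          = pW w * pX1W w x1 * (pX2W w x2 * pU2 x2 u2) * pU1 x1 u1 := by
      intro u1; rw [hm3]; ring
    rw [Finset.sum_congr rfl fun u1 _ => hpull u1,
      Finset.sum_congr rfl fun u1 _ => hpull2 u1]
    exact perturb_cancel _ _ _ (hKpull w x1 (pX2W w x2 * pU2 x2 u2))
  · -- factorization of pe
    intro x1 x2 w u1 u2 a1 a2 z y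
    rw [hpe, hp]; ring
  · -- existence of nonzero ψ when the cardinality bound holds
    intro hcard
    set L : (U1 → ℝ) →ₗ[ℝ] ((X1 × X2 × W × Y) → ℝ) :=
      { toFun := fun ψ q => ∑ u1 : U1, (∑ u2 : U2, ∑ a1 : A1, ∑ a2 : A2, ∑ z : Zt,
          p (q.1, q.2.1, q.2.2.1, u1, u2, a1, a2, z, q.2.2.2)) * ψ u1,
        map_add' := fun ψ1 ψ2 => by
          funext q
          simp [mul_add, Finset.sum_add_distrib],
        map_smul' := fun c ψ => by
          funext q
          simp only [Pi.smul_apply, smul_eq_mul, RingHom.id_apply, Finset.mul_sum]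
          exact Finset.sum_congr rfl fun u1 _ => by ring } with hL
    have hninj : ¬ Function.Injective L := by
      intro hinj
      have h1 := LinearMap.finrank_le_finrank_of_injective hinj
      rw [Module.finrank_fintype_fun_eq_card, Module.finrank_fintype_fun_eq_card] at h1
      have h2 : Fintype.card (X1 × X2 × W × Y)
          = Fintype.card X1 * Fintype.card X2 * Fintype.card W * Fintype.card Y := by
        simp [Fintype.card_prod, mul_assoc]
      rw [h2] at h1
      omega
    obtain ⟨a, b, hab, hne⟩ := Function.not_injective_iff.1 hninj
    refine ⟨fun u1 => a u1 - b u1, ?_, ?_⟩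
    · intro h
      apply hne
      funext u1
      have := congrFun h u1
      simpa [sub_eq_zero] using this
    · intro x1 x2 w y _
      have h0 := congrFun hab (x1, x2, w, y)
      simp only [hL, LinearMap.coe_mk, AddHom.coe_mk] at h0
      have : ∑ u1 : U1, (∑ u2 : U2, ∑ a1 : A1, ∑ a2 : A2, ∑ z : Zt,
          p (x1, x2, w, u1, u2, a1, a2, z, y)) * (a u1 - b u1)
          = (∑ u1 : U1, (∑ u2 : U2, ∑ a1 : A1, ∑ a2 : A2, ∑ z : Zt,
              p (x1, x2, w, u1, u2, a1, a2, z, y)) * a u1)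
            - ∑ u1 : U1, (∑ u2 : U2, ∑ a1 : A1, ∑ a2 : A2, ∑ z : Zt,
              p (x1, x2, w, u1, u2, a1, a2, z, y)) * b u1 := by
        rw [← Finset.sum_sub_distrib]
        exact Finset.sum_congr rfl fun u1 _ => by ring
      rw [this, h0, sub_self]


end Perturbation

end SecCoord
end
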